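/- Tightened value-function cut, separation (second part of Lemma 2 of the paper): let (y′,z*) be a bilevel feasible pair, let Φ_tight be the tightened value-function bound of z*, and let z′ ∈ 𝒮 satisfy π^F(y′,z′) < π^F(y′,z*) (i.e., (y′,z′) is integer feasible but bilevel infeasible). Then π^F(y′,z′) < Φ_tight(y′); that is, the pair (y′,z′) violates the tightened value-function cut. -/

import Mathlib

/-!
Fix a customer `j` and a period `t` at which the follower's `z*` captures `j` through `i`
against the leader's `y`. Its revenue there is `r_i D_j^{ℓt} (1 - ρ y_{it})`, where `ℓ` is the
last capture period before `t` under `(y, z*)`. Without the leader that last capture period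
can only move earlier, to some `ℓ₀ ≤ ℓ`, and every `o_{ij}^{ℓ₀st}(y)` with `s > ℓ` vanishes,
because a leader facility at `s ∈ (ℓ, t)`, or one preferred to `i` at `t`, would contradict
the choice of `ℓ` or of `i`. Hence the `(ℓ₀, t, j, i)` term of `Φ_tight(y)` dominates that
revenue, all other terms are nonnegative, and `π^F(y, z*) ≤ Φ_tight(y)`. The separation
property follows from `π^F(y', z') < π^F(y', z*)`.
-/

open Finset

attribute [local instance] Classical.propDecidable

/-- Data of an instance of the competitive dynamic facility location problem under
cumulative customer demand (CDFLP-CCD).  `pref j a b` means that customer `j`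
strictly prefers option `a` over option `b`, where `none` is the no-service option. -/
structure CDFLP (I J : Type*) where
  /-- number of time periods; the period set is `{1, …, T}` -/
  T : ℕ
  /-- spawning demand of customer `j` at period `t` -/
  d : J → ℕ → ℝ
  /-- reward per unit of demand captured at location `i` -/
  r : I → ℝ
  /-- splitting factor -/
  ρ : ℝ
  /-- strict preference: `pref j a b` means `a ≻_j b` -/
  pref : J → Option I → Option I → Prop
namespace CDFLP

variable {I J : Type*} [Fintype I] [Fintype J]

/-- The model hypotheses: `T ≥ 1`, nonnegative demands and rewards, `ρ ∈ [0,1]`,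
and every `≻_j` is a strict linear order on `I ∪ {0}`. -/
def Valid (P : CDFLP I J) : Prop :=
  1 ≤ P.T ∧ (∀ j t, 0 ≤ P.d j t) ∧ (∀ i, 0 ≤ P.r i) ∧
    0 ≤ P.ρ ∧ P.ρ ≤ 1 ∧ ∀ j, IsStrictTotalOrder (Option I) (P.pref j)

/-- The locations considered by customer `j`, i.e. those preferred over no service. -/
noncomputable def considered (P : CDFLP I J) (j : J) : Finset I :=
  Finset.univ.filter fun i => P.pref j (some i) none

/-- `w` is a location schedule: on the planning horizon it is `{0,1}`-valued and opens
at most one facility per period. -/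
def IsSched (P : CDFLP I J) (w : I → ℕ → ℝ) : Prop :=
  ∀ t, 1 ≤ t → t ≤ P.T → (∀ i, w i t = 0 ∨ w i t = 1) ∧ (∑ i, w i t) ≤ 1

/-- `A_j^t(y,z)`: considered locations of `j` opened by the leader or the follower
at period `t`. -/
noncomputable def captureSet (P : CDFLP I J) (y z : I → ℕ → ℝ) (j : J) (t : ℕ) : Finset I :=
  Finset.univ.filter fun i => P.pref j (some i) none ∧ (y i t = 1 ∨ z i t = 1)

/-- `t ∈ 𝒯` is a capture period of customer `j`. -/
def IsCapture (P : CDFLP I J) (y z : I → ℕ → ℝ) (j : J) (t : ℕ) : Prop :=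
  1 ≤ t ∧ t ≤ P.T ∧ (P.captureSet y z j t).Nonempty

/-- `i` is the `≻_j`-greatest element of the capture set `A_j^t(y,z)`,
i.e. `i = i*(j,t)`. -/
def IsPatron (P : CDFLP I J) (y z : I → ℕ → ℝ) (j : J) (t : ℕ) (i : I) : Prop :=
  i ∈ P.captureSet y z j t ∧
    ∀ k ∈ P.captureSet y z j t, k ≠ i → P.pref j (some i) (some k)

/-- The greatest capture period of `j` smaller than `t` (`0` if there is none). -/
noncomputable def lastCap (P : CDFLP I J) (y z : I → ℕ → ℝ) (j : J) (t : ℕ) : ℕ :=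
  ((Finset.Ico 1 t).filter fun s => P.IsCapture y z j s).sup id

/-- `D_j^{ℓt}`: demand of customer `j` spawned in periods `ℓ+1, …, t`. -/
noncomputable def D (P : CDFLP I J) (j : J) (ℓ t : ℕ) : ℝ :=
  ∑ s ∈ Finset.Icc (ℓ + 1) t, P.d j s

/-- `v_{ij}^{ℓt}(y,z)`: fraction of `D_j^{ℓt}` captured by the follower through
location `i` at period `t`. -/
noncomputable def v (P : CDFLP I J) (y z : I → ℕ → ℝ) (j : J) (i : I) (ℓ t : ℕ) : ℝ :=
  if P.IsCapture y z j t ∧ ℓ = P.lastCap y z j t ∧ P.IsPatron y z j t i ∧ z i t = 1 then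
    1 - P.ρ * y i t
  else 0

/-- `u_{ij}^{ℓt}(y,z)`: fraction of `D_j^{ℓt}` captured by the leader through
location `i` at period `t`. -/
noncomputable def u (P : CDFLP I J) (y z : I → ℕ → ℝ) (j : J) (i : I) (ℓ t : ℕ) : ℝ :=
  if P.IsCapture y z j t ∧ ℓ = P.lastCap y z j t ∧ P.IsPatron y z j t i ∧ y i t = 1 then
    1 - (1 - P.ρ) * z i t
  else 0

/-- The follower's profit `π^F(y,z)`. -/
noncomputable def profitF (P : CDFLP I J) (y z : I → ℕ → ℝ) : ℝ :=
  ∑ t ∈ Finset.Icc 1 P.T, ∑ ℓ ∈ Finset.range t, ∑ j : J, ∑ i ∈ P.considered j,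
    P.r i * P.D j ℓ t * P.v y z j i ℓ t

/-- The leader's profit `π^L(y,z)`. -/
noncomputable def profitL (P : CDFLP I J) (y z : I → ℕ → ℝ) : ℝ :=
  ∑ t ∈ Finset.Icc 1 P.T, ∑ ℓ ∈ Finset.range t, ∑ j : J, ∑ i ∈ P.considered j,
    P.r i * P.D j ℓ t * P.u y z j i ℓ t

/-- `(y,z)` is bilevel feasible: both are schedules and `z` is an optimal
reaction of the follower against `y`. -/
def BilevelFeasible (P : CDFLP I J) (y z : I → ℕ → ℝ) : Prop :=
  P.IsSched y ∧ P.IsSched z ∧ ∀ z', P.IsSched z' → P.profitF y z' ≤ P.profitF y z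


/-- `o_{ij}^{st}(y)`: the maximum of the `y`-values at locations/periods through which
the leader can intercept the demand portion spawned at period `s` and captured at
period `t` through location `i`; the maximum of an empty set is taken as `0`. -/
noncomputable def oMax (P : CDFLP I J) (y : I → ℕ → ℝ) (j : J) (i : I) (s t : ℕ) : ℝ :=
  max ((Finset.Ico s t ×ˢ P.considered j).fold max 0 fun p => y p.2 p.1)
      ((Finset.univ.filter fun k => P.pref j (some k) (some i)).fold max 0 fun k => y k t)

/-- The tightened value-function bound of the follower schedule `zs`, evaluated at a
leader schedule `y` (the `v`-values are taken against the empty leader schedule). -/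
noncomputable def tightenedBound (P : CDFLP I J) (zs y : I → ℕ → ℝ) : ℝ :=
  ∑ t ∈ Finset.Icc 1 P.T, ∑ ℓ ∈ Finset.range t, ∑ j : J, ∑ i ∈ P.considered j,
    P.r i * P.v (fun _ _ => 0) zs j i ℓ t *
      (P.D j ℓ t - (∑ s ∈ Finset.Icc (ℓ + 1) t, P.d j s * P.oMax y j i s t)
        - P.ρ * y i t * ∑ s ∈ Finset.Icc (ℓ + 1) t, P.d j s * (1 - P.oMax y j i s t))


set_option linter.unusedSectionVars false

section Schedules

variable {P : CDFLP I J} {w : I → ℕ → ℝ} {t : ℕ}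

lemma IsSched.le_one (hw : P.IsSched w) (ht1 : 1 ≤ t) (ht2 : t ≤ P.T) (i : I) : w i t ≤ 1 := by
  rcases (hw t ht1 ht2).1 i with h | h <;> simp [h]

lemma IsSched.eq_zero_of_ne_one (hw : P.IsSched w) (ht1 : 1 ≤ t) (ht2 : t ≤ P.T) {i : I}
    (h : w i t ≠ 1) : w i t = 0 :=
  ((hw t ht1 ht2).1 i).resolve_right h

lemma IsSched.one_sub_rho_mul_nonneg (hP : P.Valid) (hw : P.IsSched w) (ht1 : 1 ≤ t)
    (ht2 : t ≤ P.T) (i : I) : 0 ≤ 1 - P.ρ * w i t := by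
  obtain ⟨-, -, -, hρ0, hρ1, -⟩ := hP
  rcases (hw t ht1 ht2).1 i with h | h <;> rw [h] <;> linarith

end Schedules

section Capture

variable {P : CDFLP I J} {y z : I → ℕ → ℝ} {j : J} {s t : ℕ} {i : I}

lemma captureSet_empty_leader_subset (y : I → ℕ → ℝ) :
    P.captureSet (fun _ _ => 0) z j t ⊆ P.captureSet y z j t := by
  intro k hk
  simp only [captureSet, mem_filter, mem_univ, true_and] at hk ⊢
  exact ⟨hk.1, .inr (hk.2.resolve_left zero_ne_one)⟩

lemma lastCap_lt (ht : 1 ≤ t) : P.lastCap y z j t < t :=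
  (Finset.sup_lt_iff (show (⊥ : ℕ) < t from ht)).mpr
    fun _ hs => (mem_Ico.mp (mem_filter.mp hs).1).2

lemma le_lastCap (hs : P.IsCapture y z j s) (hst : s < t) : s ≤ P.lastCap y z j t :=
  Finset.le_sup (f := id) (mem_filter.mpr ⟨mem_Ico.mpr ⟨hs.1, hst⟩, hs⟩)

lemma lastCap_empty_leader_le (y : I → ℕ → ℝ) :
    P.lastCap (fun _ _ => 0) z j t ≤ P.lastCap y z j t := by
  refine Finset.sup_mono (monotone_filter_right _ ?_)
  rintro s - ⟨hs1, hsT, k, hk⟩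
  exact ⟨hs1, hsT, k, captureSet_empty_leader_subset y hk⟩

lemma IsPatron.isCapture (h : P.IsPatron y z j t i) (ht1 : 1 ≤ t) (ht2 : t ≤ P.T) :
    P.IsCapture y z j t :=
  ⟨ht1, ht2, i, h.1⟩

lemma IsPatron.pref_none (h : P.IsPatron y z j t i) : P.pref j (some i) none :=
  (mem_filter.mp h.1).2.1

lemma IsPatron.mem_considered (h : P.IsPatron y z j t i) : i ∈ P.considered j :=
  mem_filter.mpr ⟨mem_univ _, h.pref_none⟩

lemma IsPatron.empty_leader (h : P.IsPatron y z j t i) (hzi : z i t = 1) :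
    P.IsPatron (fun _ _ => 0) z j t i :=
  ⟨mem_filter.mpr ⟨mem_univ _, h.pref_none, .inr hzi⟩,
    fun k hk hki => h.2 k (captureSet_empty_leader_subset y hk) hki⟩

lemma IsPatron.unique [IsStrictOrder (Option I) (P.pref j)] {k : I}
    (hi : P.IsPatron y z j t i) (hk : P.IsPatron y z j t k) : i = k := by
  by_contra hne
  exact irrefl_of (P.pref j) (some i)
    (trans_of (P.pref j) (hi.2 k hk.1 (Ne.symm hne)) (hk.2 i hi.1 hne))

lemma IsPatron.leader_eq_zero_of_pref [IsStrictOrder (Option I) (P.pref j)]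
    (hy : P.IsSched y) (ht1 : 1 ≤ t) (ht2 : t ≤ P.T) (hi : P.IsPatron y z j t i) {k : I}
    (hki : P.pref j (some k) (some i)) : y k t = 0 := by
  refine hy.eq_zero_of_ne_one ht1 ht2 fun hyk => irrefl_of (P.pref j) (some k) ?_
  have hk : k ∈ P.captureSet y z j t :=
    mem_filter.mpr ⟨mem_univ _, trans_of (P.pref j) hki hi.pref_none, .inl hyk⟩
  exact trans_of (P.pref j) hki (hi.2 k hk fun hki' => irrefl_of (P.pref j) _ (hki' ▸ hki))

lemma leader_eq_zero_of_lastCap_lt (hy : P.IsSched y) (hs : P.lastCap y z j t < s)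
    (hst : s < t) (ht : t ≤ P.T) {k : I} (hk : k ∈ P.considered j) : y k s = 0 := by
  have hs1 : 1 ≤ s := by omega
  refine hy.eq_zero_of_ne_one hs1 (by omega) fun hyk => ?_
  have hcap : P.IsCapture y z j s :=
    ⟨hs1, by omega, k, mem_filter.mpr ⟨mem_univ _, (mem_filter.mp hk).2, .inl hyk⟩⟩
  exact absurd (le_lastCap hcap hst) (by omega)

end Capture

section Interception

variable {P : CDFLP I J} {y z : I → ℕ → ℝ} {j : J} {i : I} {s t : ℕ}

lemma oMax_nonneg : 0 ≤ P.oMax y j i s t :=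
  le_max_of_le_left ((le_fold_max 0).mpr (.inl le_rfl))

lemma oMax_le {c : ℝ} (hc : 0 ≤ c)
    (hbefore : ∀ p ∈ Ico s t, ∀ k ∈ P.considered j, y k p ≤ c)
    (hat : ∀ k, P.pref j (some k) (some i) → y k t ≤ c) : P.oMax y j i s t ≤ c := by
  refine max_le ((fold_max_le c).mpr ⟨hc, ?_⟩) ((fold_max_le c).mpr ⟨hc, ?_⟩)
  · rintro ⟨p, k⟩ hpk
    exact hbefore p (mem_product.mp hpk).1 k (mem_product.mp hpk).2
  · exact fun k hk => hat k (mem_filter.mp hk).2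

lemma oMax_le_one (hy : P.IsSched y) (hs : 1 ≤ s) (hst : s ≤ t) (ht : t ≤ P.T) :
    P.oMax y j i s t ≤ 1 :=
  oMax_le zero_le_one
    (fun _ hp k _ => hy.le_one (hs.trans (mem_Ico.mp hp).1) ((mem_Ico.mp hp).2.le.trans ht) k)
    (fun k _ => hy.le_one (hs.trans hst) ht k)

lemma oMax_eq_zero_of_lastCap_lt [IsStrictOrder (Option I) (P.pref j)] (hy : P.IsSched y)
    (hi : P.IsPatron y z j t i) (hs : P.lastCap y z j t < s) (hst : s ≤ t) (ht : t ≤ P.T) :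
    P.oMax y j i s t = 0 :=
  le_antisymm
    (oMax_le le_rfl
      (fun p hp k hk => (leader_eq_zero_of_lastCap_lt hy (hs.trans_le (mem_Ico.mp hp).1)
        (mem_Ico.mp hp).2 ht hk).le)
      (fun k hki => (hi.leader_eq_zero_of_pref hy (by omega) ht hki).le))
    oMax_nonneg

end Interception

/-- The factor multiplying `r_i v_{ij}^{ℓt}(𝟘, z*)` in `Φ_tight(y)`. -/
noncomputable def cutCoeff (P : CDFLP I J) (y : I → ℕ → ℝ) (j : J) (i : I) (ℓ t : ℕ) : ℝ :=
  P.D j ℓ t - (∑ s ∈ Finset.Icc (ℓ + 1) t, P.d j s * P.oMax y j i s t)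
    - P.ρ * y i t * ∑ s ∈ Finset.Icc (ℓ + 1) t, P.d j s * (1 - P.oMax y j i s t)

section CutCoeff

variable {P : CDFLP I J} {y : I → ℕ → ℝ} {j : J} {i : I} {ℓ t : ℕ}

lemma tightenedBound_eq_sum_cutCoeff (zs : I → ℕ → ℝ) :
    P.tightenedBound zs y = ∑ t ∈ Icc 1 P.T, ∑ ℓ ∈ range t, ∑ j : J, ∑ i ∈ P.considered j,
      P.r i * P.v (fun _ _ => 0) zs j i ℓ t * P.cutCoeff y j i ℓ t :=
  rfl

lemma cutCoeff_eq_sum :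
    P.cutCoeff y j i ℓ t =
      ∑ s ∈ Icc (ℓ + 1) t, P.d j s * (1 - P.oMax y j i s t) * (1 - P.ρ * y i t) := by
  rw [cutCoeff, D, mul_sum, ← sum_sub_distrib, ← sum_sub_distrib]
  exact sum_congr rfl fun s _ => by ring

lemma cutCoeff_summand_nonneg (hP : P.Valid) (hy : P.IsSched y) (ht : t ≤ P.T)
    {s : ℕ} (hs : s ∈ Icc (ℓ + 1) t) :
    0 ≤ P.d j s * (1 - P.oMax y j i s t) * (1 - P.ρ * y i t) := by
  obtain ⟨hs1, hst⟩ := mem_Icc.mp hs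
  have ho : P.oMax y j i s t ≤ 1 := oMax_le_one hy (by omega) hst ht
  exact mul_nonneg (mul_nonneg (hP.2.1 j s) (by linarith))
    (hy.one_sub_rho_mul_nonneg hP (by omega) ht i)

lemma cutCoeff_nonneg (hP : P.Valid) (hy : P.IsSched y) (ht : t ≤ P.T) :
    0 ≤ P.cutCoeff y j i ℓ t := by
  rw [cutCoeff_eq_sum]
  exact sum_nonneg fun s hs => cutCoeff_summand_nonneg hP hy ht hs

/-- After the last capture period every `oMax` vanishes, so lowering `ℓ` only adds
nonnegative summands. -/
lemma D_mul_le_cutCoeff (hP : P.Valid) (hy : P.IsSched y) {z : I → ℕ → ℝ}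
    (hi : P.IsPatron y z j t i) (hℓ : ℓ ≤ P.lastCap y z j t) (ht : t ≤ P.T) :
    P.D j (P.lastCap y z j t) t * (1 - P.ρ * y i t) ≤ P.cutCoeff y j i ℓ t := by
  have := (hP.2.2.2.2.2 j).toIsStrictOrder
  rw [cutCoeff_eq_sum, D, sum_mul]
  calc ∑ s ∈ Icc (P.lastCap y z j t + 1) t, P.d j s * (1 - P.ρ * y i t)
      = ∑ s ∈ Icc (P.lastCap y z j t + 1) t,
          P.d j s * (1 - P.oMax y j i s t) * (1 - P.ρ * y i t) :=
        sum_congr rfl fun s hs => by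
          rw [oMax_eq_zero_of_lastCap_lt hy hi (by grind) (mem_Icc.mp hs).2 ht]
          ring
    _ ≤ _ :=
        sum_le_sum_of_subset_of_nonneg (Icc_subset_Icc (by omega) le_rfl)
          fun s hs _ => cutCoeff_summand_nonneg hP hy ht hs

end CutCoeff

section FollowerRevenue

variable {P : CDFLP I J} {y z : I → ℕ → ℝ} {j : J} {i : I} {t : ℕ}

lemma v_empty_leader_nonneg {ℓ : ℕ} : 0 ≤ P.v (fun _ _ => 0) z j i ℓ t := by
  unfold v
  split_ifs <;> simp

lemma v_empty_leader_eq_one (hi : P.IsPatron (fun _ _ => 0) z j t i) (hzi : z i t = 1)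
    (ht1 : 1 ≤ t) (ht2 : t ≤ P.T) :
    P.v (fun _ _ => 0) z j i (P.lastCap (fun _ _ => 0) z j t) t = 1 := by
  rw [v, if_pos ⟨hi.isCapture ht1 ht2, rfl, hi, hzi⟩]
  simp

lemma sum_revenue_eq_of_isPatron (hP : P.Valid) (hi : P.IsPatron y z j t i) (hzi : z i t = 1)
    (ht1 : 1 ≤ t) (ht2 : t ≤ P.T) :
    ∑ ℓ ∈ range t, ∑ k ∈ P.considered j, P.r k * P.D j ℓ t * P.v y z j k ℓ t =
      P.r i * P.D j (P.lastCap y z j t) t * (1 - P.ρ * y i t) := by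
  have := (hP.2.2.2.2.2 j).toIsStrictOrder
  rw [sum_eq_single_of_mem (P.lastCap y z j t) (mem_range.mpr (lastCap_lt ht1)),
    sum_eq_single_of_mem i hi.mem_considered,
    v, if_pos ⟨hi.isCapture ht1 ht2, rfl, hi, hzi⟩]
  · exact fun k _ hki => by rw [v, if_neg fun h => hki (h.2.2.1.unique hi), mul_zero]
  · exact fun ℓ _ hℓ => sum_eq_zero fun k _ => by rw [v, if_neg fun h => hℓ h.2.1, mul_zero]

lemma sum_revenue_eq_zero (h : ¬∃ i, P.IsCapture y z j t ∧ P.IsPatron y z j t i ∧ z i t = 1) :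
    ∑ ℓ ∈ range t, ∑ k ∈ P.considered j, P.r k * P.D j ℓ t * P.v y z j k ℓ t = 0 :=
  sum_eq_zero fun _ _ => sum_eq_zero fun k _ => by
    rw [v, if_neg fun hk => h ⟨k, hk.1, hk.2.2⟩, mul_zero]

end FollowerRevenue

theorem profitF_le_tightenedBound {P : CDFLP I J} (hP : P.Valid) {y : I → ℕ → ℝ}
    (hy : P.IsSched y) (zs : I → ℕ → ℝ) : P.profitF y zs ≤ P.tightenedBound zs y := by
  rw [profitF, tightenedBound_eq_sum_cutCoeff]
  refine sum_le_sum fun t ht => ?_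
  obtain ⟨ht1, ht2⟩ := mem_Icc.mp ht
  have hterm : ∀ ℓ j, ∀ i ∈ P.considered j,
      0 ≤ P.r i * P.v (fun _ _ => 0) zs j i ℓ t * P.cutCoeff y j i ℓ t := fun ℓ j i _ =>
    mul_nonneg (mul_nonneg (hP.2.2.1 i) v_empty_leader_nonneg) (cutCoeff_nonneg hP hy ht2)
  rw [sum_comm, sum_comm (s := range t)]
  refine sum_le_sum fun j _ => ?_
  by_cases hcap : ∃ i, P.IsCapture y zs j t ∧ P.IsPatron y zs j t i ∧ zs i t = 1
  · obtain ⟨i, -, hi, hzi⟩ := hcap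
    set ℓ₀ := P.lastCap (fun _ _ => 0) zs j t
    have hℓ₀ : ℓ₀ ∈ range t := mem_range.mpr (lastCap_lt ht1)
    rw [sum_revenue_eq_of_isPatron hP hi hzi ht1 ht2]
    calc P.r i * P.D j (P.lastCap y zs j t) t * (1 - P.ρ * y i t)
        ≤ P.r i * 1 * P.cutCoeff y j i ℓ₀ t := by
          rw [mul_one, mul_assoc]
          exact mul_le_mul_of_nonneg_left
            (D_mul_le_cutCoeff hP hy hi (lastCap_empty_leader_le y) ht2) (hP.2.2.1 i)
      _ = P.r i * P.v (fun _ _ => 0) zs j i ℓ₀ t * P.cutCoeff y j i ℓ₀ t := by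
          rw [v_empty_leader_eq_one (hi.empty_leader hzi) hzi ht1 ht2]
      _ ≤ ∑ k ∈ P.considered j, P.r k * P.v (fun _ _ => 0) zs j k ℓ₀ t * P.cutCoeff y j k ℓ₀ t :=
          single_le_sum (hterm ℓ₀ j) hi.mem_considered
      _ ≤ _ := single_le_sum (fun ℓ _ => sum_nonneg (hterm ℓ j)) hℓ₀
  · rw [sum_revenue_eq_zero hcap]
    exact sum_nonneg fun ℓ _ => sum_nonneg (hterm ℓ j)

theorem tightened_cut_separation_general (P : CDFLP I J) (hP : P.Valid)
    (y' zs : I → ℕ → ℝ) (hfeas : P.BilevelFeasible y' zs)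
    (z' : I → ℕ → ℝ)
    (hinf : P.profitF y' z' < P.profitF y' zs) :
    P.profitF y' z' < P.tightenedBound zs y' :=
  hinf.trans_le (profitF_le_tightenedBound hP hfeas.1 zs)

/-- **Lemma 2, separation.**  The tightened value-function cut built from a bilevel
feasible pair `(y', zs)` is violated by every integer-feasible but bilevel-infeasible
pair `(y', z')`. -/
theorem tightened_cut_separation (P : CDFLP I J) (hP : P.Valid)
    (y' zs : I → ℕ → ℝ) (hfeas : P.BilevelFeasible y' zs)
    (z' : I → ℕ → ℝ) (hz' : P.IsSched z')
    (hinf : P.profitF y' z' < P.profitF y' zs) :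
    P.profitF y' z' < P.tightenedBound zs y' :=
  tightened_cut_separation_general P hP y' zs hfeas z' hinf

end CDFLP
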